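/- arXiv:2012.08010 — 2 statements merged into one kernel-verified Lean document; each statement's English description precedes it below -/
import Mathlib

section
/- Let n ≥ 1 and let P_n = M ⊔ M̂ with the relation ≤_P described in the context, and let T := {x̂ : x ∈ M∖M₀}. The number of down-sets U of ⟨P_n; ≤_P⟩ (subsets U with x ≤_P y ∈ U implying x ∈ U) satisfying U ∩ T = ∅ equals f(n) = ¼(n⁶ + 10n⁵ + 41n⁴ + 96n³ + 148n² + 148n + 144). -/
/-!
STATEMENT 14: Let n ≥ 1 and let P_n = M ⊔ M̂ with the relation ≤_P, and let
T := {x̂ : x ∈ M∖M₀}.  The number of down-sets U of ⟨P_n; ≤_P⟩ satisfying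
U ∩ T = ∅ equals f(n) = ¼(n⁶ + 10n⁵ + 41n⁴ + 96n³ + 148n² + 148n + 144).
(We state this as: 4 times the number of such down-sets equals
n⁶ + 10n⁵ + 41n⁴ + 96n³ + 148n² + 148n + 144.)
-/

namespace ExpandingBelnap
/-! ### The alter ego `M̃ₙ`

The sorts are `M₀ = {⊤⁰, f⁰, t⁰, ⊥⁰}` and `M_k = {⊤ᵏ, fᵏ, 0ᵏ, tᵏ, 1ᵏ, ⊥ᵏ}` for
`k ∈ [1, n]`.  We realise the combined carrier as the type `MElt n`, where
`MElt.m0 a` is the element `a` of the sort `M₀` and `MElt.mk i v` is the element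
`v` of the sort `M_{i+1}` (for `i : Fin n`). -/

/-- The four-element sort `M₀ = {⊤⁰, f⁰, t⁰, ⊥⁰}`. -/
inductive MZero : Type
  | top | fls | tru | bot
  deriving DecidableEq

instance : Fintype MZero :=
  ⟨{.top, .fls, .tru, .bot}, fun x => by cases x <;> simp⟩

/-- The six-element sort `M_k = {⊤ᵏ, fᵏ, 0ᵏ, tᵏ, 1ᵏ, ⊥ᵏ}`. -/
inductive MSix : Type
  | top | fls | zer | tru | one | bot
  deriving DecidableEq

instance : Fintype MSix :=
  ⟨{.top, .fls, .zer, .tru, .one, .bot}, fun x => by cases x <;> simp⟩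

/-- The combined carrier `M₀ ⊔ M₁ ⊔ ⋯ ⊔ Mₙ` of the alter ego `M̃ₙ`. -/
inductive MElt (n : ℕ) : Type
  | m0 : MZero → MElt n
  | mk : Fin n → MSix → MElt n
  deriving DecidableEq, Fintype

/-- The topology on `M̃ₙ` is discrete. -/
instance (n : ℕ) : TopologicalSpace (MElt n) := ⊥

/-- The sort of an element of `M̃ₙ`. -/
def msort {n : ℕ} : MElt n → Fin (n + 1)
  | .m0 _ => 0
  | .mk i _ => i.succ

/-- The six-to-four-element projection underlying `g_k : M_k → M₀`:
`⊤ᵏ ↦ ⊤⁰`, `⊥ᵏ ↦ ⊥⁰`, `fᵏ, 0ᵏ ↦ f⁰`, `tᵏ, 1ᵏ ↦ t⁰`. -/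
def mproj : MSix → MZero
  | .top => .top
  | .bot => .bot
  | .fls => .fls
  | .zer => .fls
  | .tru => .tru
  | .one => .tru

/-- The combined operation of `M̃ₙ`: it is `g_k` on the sort `M_k` (`k ∈ [1, n]`)
and the identity on the sort `M₀`. -/
def mg {n : ℕ} : MElt n → MElt n
  | .m0 a => .m0 a
  | .mk _ v => .m0 (mproj v)

/-- The relation `≤⁰ = (M₀ × {⊤⁰}) ∪ ({⊥⁰} × M₀) ∪ {(f⁰,f⁰), (t⁰,t⁰)}` on `M₀`. -/
def mr0 : MZero → MZero → Prop := fun a b => b = .top ∨ a = .bot ∨ a = b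

/-- The pattern common to the relations `≤ᵏ` and `≤ʲᵏ` on the six-element sorts:
`{(⊤,⊤), (⊥,⊥), (f,f), (f,0), (0,0), (t,t), (t,1), (1,1)}`. -/
def mr6 : MSix → MSix → Prop :=
  fun v w => v = w ∨ (v = .fls ∧ w = .zer) ∨ (v = .tru ∧ w = .one)

/-- The combined relation of `M̃ₙ`: it is `≤⁰` within the sort `M₀`, `≤ᵏ` within a
sort `M_k` with `k ∈ [1, n]`, the relation `≤ʲᵏ` from `M_j` to `M_k` when
`1 ≤ j < k ≤ n`, and empty between all other pairs of sorts. -/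
def mr {n : ℕ} : MElt n → MElt n → Prop := fun x y =>
  match x, y with
  | .m0 a, .m0 b => mr0 a b
  | .mk i v, .mk j w => i ≤ j ∧ mr6 v w
  | _, _ => False

/-- `x ∈ M₀`, i.e. `x` lies in the four-element sort. -/
def inM0 {n : ℕ} (x : MElt n) : Prop := msort x = 0

/-- The underlying set of `P_n = M ⊔ M̂`: `Sum.inl x` is `x ∈ M` and `Sum.inr x`
is the corresponding element `x̂` of the disjoint copy `M̂`. -/
abbrev PN (n : ℕ) : Type := MElt n ⊕ MElt n

/-- The relation `≤_P` on `P_n = M ⊔ M̂` (here `mr` is the partial order `≤` on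
`M` and `mg` is the map `g : M → M₀`):
* for `x, y ∈ M`: `x ≤_P y` iff `x ≤ y`, or `x ∈ M∖M₀`, `y ∈ M₀` and `g x ≤ y`;
* for `x, y ∈ M`: `x̂ ≤_P ŷ` iff `y ≤ x`, or `x ∈ M₀`, `y ∈ M∖M₀` and `g y ≤ x`;
* for `x ∈ M∖M₀`, `y ∈ M₀`: `x ≤_P ŷ` iff `y ≤ g x`;
* for `x ∈ M₀`, `y ∈ M∖M₀`: `x ≤_P ŷ` iff `x ≤ g y`;
* for `x, y ∈ M∖M₀`: `x ≤_P ŷ` iff `g x ≤ g y` or `g y ≤ g x`;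
* no other pairs are related. -/
def ple (n : ℕ) : PN n → PN n → Prop := fun a b =>
  match a, b with
  | .inl x, .inl y => mr x y ∨ (¬ inM0 x ∧ inM0 y ∧ mr (mg x) y)
  | .inl x, .inr y =>
      (¬ inM0 x ∧ inM0 y ∧ mr y (mg x)) ∨
        (inM0 x ∧ ¬ inM0 y ∧ mr x (mg y)) ∨
        (¬ inM0 x ∧ ¬ inM0 y ∧ (mr (mg x) (mg y) ∨ mr (mg y) (mg x)))
  | .inr x, .inr y => mr y x ∨ (inM0 x ∧ ¬ inM0 y ∧ mr (mg y) x)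
  | .inr _, .inl _ => False

/-- `U` is a down-set of `⟨P_n; ≤_P⟩`. -/
def IsDownset (n : ℕ) (U : Set (PN n)) : Prop :=
  ∀ a b, ple n a b → b ∈ U → a ∈ U

/-- The set `T = {x̂ : x ∈ M ∖ M₀}`. -/
def Tset (n : ℕ) : Set (PN n) := {p | ∃ x : MElt n, ¬ inM0 x ∧ p = Sum.inr x}

end ExpandingBelnap

/-!
A down-set `U` avoiding `T` consists of its trace `A` on `M₀`, a down-set of the diamond;
its trace `B` on `M̂₀`, an up-set of the diamond (as `x̂ ≤_P ŷ` iff `y ≤ x` there); and, for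
each letter `v ∈ {⊤, f, 0, t, 1, ⊥}`, the column `{k | vᵏ ∈ U}`, which is an initial segment
`[1, t v]` of `[1, n]` because `vʲ < vᵏ` for `j < k`. The relations `fᵏ < 0ᵏ`, `tᵏ < 1ᵏ` give
`t 0 ≤ t f` and `t 1 ≤ t t`; the relations `xᵏ ≤_P a` for `g x ≤ a` and `xᵏ ≤_P b̂` for
`b ≤ g x` force the column of `v` to be full as soon as `g v` lies below an element of `A` or
above an element of `B`. Nothing else constrains `U`, since nothing of `T` lies in `U`.

So the blocks `{⊤}`, `{⊥}`, `{f, 0}`, `{t, 1}` of columns are independent, with `n + 1` (or `1`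
if forced) choices for a single column and `c = (n + 1)(n + 2)/2` (or `1`) for a pair.
Summing over the 36 pairs `(A, B)` gives `(n + 2)² c² + (4n + 10) c + 2n + 22`.
-/

theorem Fin.exists_forall_mem_iff_lt_of_isLowerSet {n : ℕ} {s : Set (Fin n)} (hs : IsLowerSet s) :
    ∃ k : Fin (n + 1), ∀ i : Fin n, i ∈ s ↔ (i : ℕ) < k := by
  rcases hs.eq_univ_or_Iio with rfl | ⟨a, rfl⟩
  · exact ⟨Fin.last n, fun i => by simp⟩
  · exact ⟨a.castSucc, fun i => by rw [Set.mem_Iio, Fin.val_castSucc, Fin.lt_def]⟩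

theorem Fin.le_of_forall_lt_imp_lt {n : ℕ} {a b : Fin (n + 1)}
    (h : ∀ i : Fin n, (i : ℕ) < a → (i : ℕ) < b) : a ≤ b := by
  by_contra! hba
  exact lt_irrefl _ (h ⟨b, by omega⟩ hba)

theorem Fin.two_mul_card_le_pairs (n : ℕ) :
    2 * Fintype.card {p : Fin (n + 1) × Fin (n + 1) // p.2 ≤ p.1} = (n + 1) * (n + 2) := by
  rw [Fintype.card_congr (Equiv.subtypeProdEquivSigmaSubtype fun a b => b ≤ a), Fintype.card_sigma]
  simp only [Fintype.card_subtype, Finset.filter_ge_eq_Iic, Fin.card_Iic]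
  rw [Fin.sum_univ_eq_sum_range (· + 1)]
  induction n with
  | zero => rfl
  | succ n ih => rw [Finset.sum_range_succ, mul_add, ih]; ring

namespace ExpandingBelnap

instance : DecidableRel mr0 := fun a b => by unfold mr0; infer_instance

/-- The six down-sets of `⟨M₀; ≤⟩`: `∅`, `{⊥}`, `{⊥, f}`, `{⊥, t}`, `{⊥, f, t}`, `M₀`. -/
inductive DiamondDownset : Type
  | empty | bot | botF | botT | botFT | univ
  deriving DecidableEq

instance : Fintype DiamondDownset :=
  ⟨{.empty, .bot, .botF, .botT, .botFT, .univ}, fun d => by cases d <;> simp⟩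

def MZero.dual : MZero → MZero
  | .top => .bot
  | .bot => .top
  | a => a

namespace DiamondDownset

def mem : DiamondDownset → MZero → Bool
  | empty, _ => false
  | bot, a => a == .bot
  | botF, a => a == .bot || a == .fls
  | botT, a => a == .bot || a == .tru
  | botFT, a => a != .top
  | univ, _ => true

def memUp (d : DiamondDownset) (a : MZero) : Bool := d.mem a.dual

theorem mem_of_mr0 : ∀ (d : DiamondDownset) {a b : MZero}, mr0 a b → d.mem b → d.mem a := by
  decide

theorem memUp_of_mr0 : ∀ (d : DiamondDownset) {a b : MZero}, mr0 a b → d.memUp a → d.memUp b := by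
  decide

theorem mem_injective : Function.Injective mem := by
  decide

theorem memUp_injective : Function.Injective memUp := by
  decide

theorem exists_mem_eq (s : MZero → Bool) (hs : ∀ a b, mr0 a b → s b → s a) :
    ∃ d : DiamondDownset, d.mem = s := by
  revert s; decide

theorem exists_memUp_eq (s : MZero → Bool) (hs : ∀ a b, mr0 a b → s a → s b) :
    ∃ d : DiamondDownset, d.memUp = s := by
  revert s; decide

end DiamondDownset

section Parametrization

open DiamondDownset

def Forced (A B : DiamondDownset) (c : MZero) : Prop :=
  (∃ a, A.mem a ∧ mr0 c a) ∨ (∃ b, B.memUp b ∧ mr0 b c)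

instance (A B : DiamondDownset) : DecidablePred (Forced A B) := fun v => by
  unfold Forced; infer_instance

variable {n : ℕ}

def Admissible (A B : DiamondDownset) (t : MSix → Fin (n + 1)) : Prop :=
  t .zer ≤ t .fls ∧ t .one ≤ t .tru ∧ ∀ v, Forced A B (mproj v) → t v = Fin.last n

instance (A B : DiamondDownset) : DecidablePred (Admissible (n := n) A B) := fun t => by
  unfold Admissible; infer_instance

-- `MElt.mk i v` is `v^(i+1)`, so the column of `v` in `toDownset A B t` is `{v¹, …, v^(t v)}`.
def toDownset (A B : DiamondDownset) (t : MSix → Fin (n + 1)) : Set (PN n)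
  | .inl (.m0 a) => A.mem a
  | .inl (.mk i v) => (i : ℕ) < t v
  | .inr (.m0 b) => B.memUp b
  | .inr (.mk _ _) => False

section toDownset

variable {A B : DiamondDownset} {t : MSix → Fin (n + 1)}

@[simp] theorem inl_m0_mem_toDownset {a : MZero} :
    .inl (.m0 a) ∈ toDownset A B t ↔ A.mem a := Iff.rfl

@[simp] theorem inl_mk_mem_toDownset {i : Fin n} {v : MSix} :
    .inl (.mk i v) ∈ toDownset A B t ↔ (i : ℕ) < t v := Iff.rfl

@[simp] theorem inr_m0_mem_toDownset {b : MZero} :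
    .inr (.m0 b) ∈ toDownset A B t ↔ B.memUp b := Iff.rfl

@[simp] theorem inr_mk_notMem_toDownset {i : Fin n} {v : MSix} :
    .inr (.mk i v) ∉ toDownset A B t := id

theorem isDownset_toDownset (h : Admissible A B t) : IsDownset n (toDownset A B t) := by
  have forced_lt : ∀ v (i : Fin n), Forced A B (mproj v) → (i : ℕ) < t v := fun v i hv => by
    rw [h.2.2 v hv]; exact i.2
  have col_anti : ∀ {v w}, mr6 v w → (t w : ℕ) ≤ t v := by
    rintro v w (rfl | ⟨rfl, rfl⟩ | ⟨rfl, rfl⟩)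
    exacts [le_rfl, h.1, h.2.1]
  rintro (x | x) (y | y) hxy hy <;> rcases x with a | ⟨i, v⟩ <;> rcases y with b | ⟨j, w⟩ <;>
    simp only [ple, mr, mg, inM0, msort, Fin.succ_ne_zero, not_true_eq_false, not_false_eq_true,
      true_and, false_and, and_false, and_self, or_false, false_or, or_self, inl_m0_mem_toDownset,
      inl_mk_mem_toDownset, inr_m0_mem_toDownset, inr_mk_notMem_toDownset] at hxy hy ⊢
  case inl.inl.m0.m0 => exact A.mem_of_mr0 hxy hy
  case inl.inl.mk.m0 => exact forced_lt v i (.inl ⟨b, hy, hxy⟩)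
  case inl.inl.mk.mk => have := col_anti hxy.2; have : (i : ℕ) ≤ j := hxy.1; omega
  case inl.inr.mk.m0 => exact forced_lt v i (.inr ⟨b, hy, hxy⟩)
  case inr.inr.m0.m0 => exact B.memUp_of_mr0 hxy hy

theorem toDownset_inter_Tset (A B : DiamondDownset) (t : MSix → Fin (n + 1)) :
    toDownset A B t ∩ Tset n = ∅ := by
  rw [Set.eq_empty_iff_forall_notMem]
  rintro _ ⟨hp, _ | _, hx, rfl⟩
  exacts [hx rfl, hp]

end toDownset

theorem toDownset_injective {A A' B B' : DiamondDownset} {t t' : MSix → Fin (n + 1)}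
    (h : toDownset A B t = toDownset A' B' t') : A = A' ∧ B = B' ∧ t = t' := by
  have hmem : ∀ p, p ∈ toDownset A B t ↔ p ∈ toDownset A' B' t' := by simp [h]
  refine ⟨mem_injective <| funext fun a => ?_, memUp_injective <| funext fun b => ?_,
    funext fun v => le_antisymm ?_ ?_⟩
  · simpa using hmem (.inl (.m0 a))
  · simpa using hmem (.inr (.m0 b))
  all_goals refine Fin.le_of_forall_lt_imp_lt fun i => ?_
  · simpa using (hmem (.inl (.mk i v))).1
  · simpa using (hmem (.inl (.mk i v))).2

theorem exists_toDownset_eq {U : Set (PN n)} (hU : IsDownset n U) (hT : U ∩ Tset n = ∅) :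
    ∃ A B t, Admissible A B t ∧ toDownset A B t = U := by
  classical
  obtain ⟨A, hA⟩ := exists_mem_eq (fun a => .inl (.m0 a) ∈ U) fun a b hab => by
    simpa using hU (.inl (.m0 a)) (.inl (.m0 b)) (Or.inl hab)
  obtain ⟨B, hB⟩ := exists_memUp_eq (fun b => .inr (.m0 b) ∈ U) fun a b hab => by
    simpa using hU (.inr (.m0 b)) (.inr (.m0 a)) (Or.inl hab)
  replace hA (a : MZero) : A.mem a ↔ .inl (.m0 a) ∈ U := by simp [hA]
  replace hB (b : MZero) : B.memUp b ↔ .inr (.m0 b) ∈ U := by simp [hB]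
  have column (v : MSix) : ∃ k : Fin (n + 1), ∀ i : Fin n, .inl (.mk i v) ∈ U ↔ (i : ℕ) < k :=
    Fin.exists_forall_mem_iff_lt_of_isLowerSet (s := {i : Fin n | Sum.inl (MElt.mk i v) ∈ U})
      fun j i hij hj => hU (.inl (.mk i v)) (.inl (.mk j v)) (Or.inl ⟨hij, Or.inl rfl⟩) hj
  choose t ht using column
  have forced {v} (hv : Forced A B (mproj v)) (i : Fin n) : Sum.inl (MElt.mk i v) ∈ U := by
    rcases hv with ⟨a, ha, hva⟩ | ⟨b, hb, hbv⟩
    · exact hU _ (.inl (.m0 a)) (Or.inr ⟨Fin.succ_ne_zero i, rfl, hva⟩) ((hA a).1 ha)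
    · exact hU _ (.inr (.m0 b)) (Or.inl ⟨Fin.succ_ne_zero i, rfl, hbv⟩) ((hB b).1 hb)
  refine ⟨A, B, t, ⟨?_, ?_, fun v hv => ?_⟩, ?_⟩
  · refine Fin.le_of_forall_lt_imp_lt fun i hi => (ht _ i).1 <| hU _ _ ?_ ((ht _ i).2 hi)
    exact Or.inl ⟨le_rfl, Or.inr (Or.inl ⟨rfl, rfl⟩)⟩
  · refine Fin.le_of_forall_lt_imp_lt fun i hi => (ht _ i).1 <| hU _ _ ?_ ((ht _ i).2 hi)
    exact Or.inl ⟨le_rfl, Or.inr (Or.inr ⟨rfl, rfl⟩)⟩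
  · exact le_antisymm (Fin.le_last _) <|
      Fin.le_of_forall_lt_imp_lt fun i _ => (ht v i).1 (forced hv i)
  · ext (x | x) <;> rcases x with a | ⟨i, v⟩
    · simp [hA]
    · simp [ht]
    · simp [hB]
    · simpa using fun hx => hT.subset ⟨hx, .mk i v, Fin.succ_ne_zero i, rfl⟩

noncomputable def downsetEquiv (n : ℕ) :
    (Σ A B : DiamondDownset, {t : MSix → Fin (n + 1) // Admissible A B t}) ≃
      {U : Set (PN n) // IsDownset n U ∧ U ∩ Tset n = ∅} :=
  Equiv.ofBijective
    (fun p => ⟨toDownset p.1 p.2.1 p.2.2, isDownset_toDownset p.2.2.2, toDownset_inter_Tset ..⟩)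
    ⟨by
      rintro ⟨A, B, t, _⟩ ⟨A', B', t', _⟩ h
      obtain ⟨rfl, rfl, rfl⟩ := toDownset_injective (congrArg Subtype.val h)
      rfl,
    by
      rintro ⟨U, hU, hT⟩
      obtain ⟨A, B, t, ht, rfl⟩ := exists_toDownset_eq hU hT
      exact ⟨⟨A, B, t, ht⟩, rfl⟩⟩

end Parametrization

section Counting

variable {n : ℕ}

abbrev Pinned (n : ℕ) (P : Prop) : Type := {k : Fin (n + 1) // P → k = Fin.last n}

abbrev PinnedPair (n : ℕ) (P : Prop) : Type :=
  {p : Fin (n + 1) × Fin (n + 1) // p.2 ≤ p.1 ∧ (P → p = (Fin.last n, Fin.last n))}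

def heightsEquiv (F : MZero → Prop) :
    {t : MSix → Fin (n + 1) //
        t .zer ≤ t .fls ∧ t .one ≤ t .tru ∧ ∀ v, F (mproj v) → t v = Fin.last n} ≃
      Pinned n (F .top) × Pinned n (F .bot) × PinnedPair n (F .fls) × PinnedPair n (F .tru) where
  toFun t := ⟨⟨t.1 .top, t.2.2.2 .top⟩, ⟨t.1 .bot, t.2.2.2 .bot⟩,
    ⟨(t.1 .fls, t.1 .zer), t.2.1, fun h => Prod.ext (t.2.2.2 .fls h) (t.2.2.2 .zer h)⟩,
    ⟨(t.1 .tru, t.1 .one), t.2.2.1, fun h => Prod.ext (t.2.2.2 .tru h) (t.2.2.2 .one h)⟩⟩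
  invFun q := ⟨fun
      | .top => q.1.1
      | .bot => q.2.1.1
      | .fls => q.2.2.1.1.1
      | .zer => q.2.2.1.1.2
      | .tru => q.2.2.2.1.1
      | .one => q.2.2.2.1.2,
    q.2.2.1.2.1, q.2.2.2.2.1, fun
      | .top, h => q.1.2 h
      | .bot, h => q.2.1.2 h
      | .fls, h => congrArg Prod.fst (q.2.2.1.2.2 h)
      | .zer, h => congrArg Prod.snd (q.2.2.1.2.2 h)
      | .tru, h => congrArg Prod.fst (q.2.2.2.2.2 h)
      | .one, h => congrArg Prod.snd (q.2.2.2.2.2 h)⟩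
  left_inv t := Subtype.ext <| funext fun v => by cases v <;> rfl
  right_inv _ := rfl

theorem card_pinned (P : Prop) [Decidable P] :
    Fintype.card (Pinned n P) = if P then 1 else n + 1 := by
  split_ifs with hP
  · rw [Fintype.card_congr (Equiv.subtypeEquivRight (q := (· = Fin.last n))
      fun k => by simp [hP]), Fintype.card_subtype_eq]
  · simp [Fintype.card_subtype, hP]

theorem card_pinnedPair (P : Prop) [Decidable P] :
    Fintype.card (PinnedPair n P) =
      if P then 1 else Fintype.card {p : Fin (n + 1) × Fin (n + 1) // p.2 ≤ p.1} := by
  split_ifs with hP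
  · refine (Fintype.card_congr (Equiv.subtypeEquivRight (q := (· = (Fin.last n, Fin.last n)))
      fun p => ?_)).trans (Fintype.card_subtype_eq _)
    exact ⟨fun hp => hp.2 hP, by rintro rfl; simp⟩
  · simp [Fintype.card_subtype, hP]

theorem card_admissible (A B : DiamondDownset) :
    Fintype.card {t : MSix → Fin (n + 1) // Admissible A B t} =
      (if Forced A B .top then 1 else n + 1) * ((if Forced A B .bot then 1 else n + 1) *
        ((if Forced A B .fls then 1
          else Fintype.card {p : Fin (n + 1) × Fin (n + 1) // p.2 ≤ p.1}) *
        (if Forced A B .tru then 1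
          else Fintype.card {p : Fin (n + 1) × Fin (n + 1) // p.2 ≤ p.1}))) := by
  rw [Fintype.card_congr ((Equiv.subtypeEquivRight (p := Admissible A B) fun _ => Iff.rfl).trans
      (heightsEquiv (Forced A B))), Fintype.card_prod, Fintype.card_prod,
    Fintype.card_prod, card_pinned, card_pinned, card_pinnedPair, card_pinnedPair]

theorem sum_diamondDownset (f : DiamondDownset → ℕ) :
    ∑ d, f d = f .empty + (f .bot + (f .botF + (f .botT + (f .botFT + f .univ)))) := rfl

theorem sum_card_admissible (n : ℕ) :
    ∑ A, ∑ B, Fintype.card {t : MSix → Fin (n + 1) // Admissible A B t} =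
      (n + 2) ^ 2 * Fintype.card {p : Fin (n + 1) × Fin (n + 1) // p.2 ≤ p.1} ^ 2 +
        (4 * n + 10) * Fintype.card {p : Fin (n + 1) × Fin (n + 1) // p.2 ≤ p.1} + 2 * n + 22 := by
  simp only [card_admissible, sum_diamondDownset]
  simp +decide only [if_true, if_false]
  ring

end Counting

theorem statement14_general (n : ℕ) :
    4 * Nat.card {U : Set (PN n) // IsDownset n U ∧ U ∩ Tset n = ∅} =
      n ^ 6 + 10 * n ^ 5 + 41 * n ^ 4 + 96 * n ^ 3 + 148 * n ^ 2 + 148 * n + 144 := by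
  rw [← Nat.card_congr (downsetEquiv n), Nat.card_eq_fintype_card]
  simp only [Fintype.card_sigma, sum_card_admissible]
  have hc := Fin.two_mul_card_le_pairs n
  generalize Fintype.card {p : Fin (n + 1) × Fin (n + 1) // p.2 ≤ p.1} = c at hc ⊢
  zify at hc ⊢
  linear_combination ((n + 2) ^ 2 * (2 * c + (n + 1) * (n + 2)) + 2 * (4 * n + 10) : ℤ) * hc

theorem statement14 (n : ℕ) (hn : 1 ≤ n) :
    4 * Nat.card {U : Set (PN n) // IsDownset n U ∧ U ∩ Tset n = ∅} =
      n ^ 6 + 10 * n ^ 5 + 41 * n ^ 4 + 96 * n ^ 3 + 148 * n ^ 2 + 148 * n + 144 :=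
  statement14_general n

end ExpandingBelnap
end

section
/- Let n ≥ 1 and let P_n = M ⊔ M̂ with the relation ≤_P described in the context, and let T := {x̂ : x ∈ M∖M₀}. The number of down-sets U of ⟨P_n; ≤_P⟩ (subsets U with x ≤_P y ∈ U implying x ∈ U) satisfying U ∩ T ≠ ∅ equals g(n) = ¼(n⁶ + 10n⁵ + 43n⁴ + 108n³ + 166n² + 148n). -/
/-!
STATEMENT 15: Let n ≥ 1 and let P_n = M ⊔ M̂ with the relation ≤_P, and let
T := {x̂ : x ∈ M∖M₀}.  The number of down-sets U of ⟨P_n; ≤_P⟩ satisfying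
U ∩ T ≠ ∅ equals g(n) = ¼(n⁶ + 10n⁵ + 43n⁴ + 108n³ + 166n² + 148n).
(We state this as: 4 times the number of such down-sets equals
n⁶ + 10n⁵ + 43n⁴ + 108n³ + 166n² + 148n.)
-/

namespace ExpandingBelnap
/-! ### parametrization -/

@[ext]
structure Param (n : ℕ) : Type where
  b : Fin (n+1)
  f : Fin (n+1)
  z : Fin (n+1)
  r : Fin (n+1)
  o : Fin (n+1)
  tp : Fin (n+1)
  fp : Fin (n+1)
  zp : Fin (n+1)
  tq : Fin (n+1)
  oq : Fin (n+1)
  bp : Fin (n+1)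
  cB : Fin 2
  cF : Fin 2
  cR : Fin 2
  cT : Fin 2
  df : Fin 2
  dr : Fin 2
  db : Fin 2
  deriving DecidableEq

variable {n : ℕ}

def pmem (p : Param n) : PN n → Prop
  | .inl (.m0 .top) => p.cT.val = 1
  | .inl (.m0 .fls) => p.cF.val = 1
  | .inl (.m0 .tru) => p.cR.val = 1
  | .inl (.m0 .bot) => p.cB.val = 1
  | .inl (.mk _ .top) => True
  | .inl (.mk i .fls) => i.val < p.f.val
  | .inl (.mk i .zer) => i.val < p.z.val
  | .inl (.mk i .tru) => i.val < p.r.val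
  | .inl (.mk i .one) => i.val < p.o.val
  | .inl (.mk i .bot) => i.val < p.b.val
  | .inr (.m0 .top) => True
  | .inr (.m0 .fls) => p.df.val = 1
  | .inr (.m0 .tru) => p.dr.val = 1
  | .inr (.m0 .bot) => p.db.val = 1
  | .inr (.mk i .top) => n ≤ i.val + p.tp.val
  | .inr (.mk i .fls) => n ≤ i.val + p.fp.val
  | .inr (.mk i .zer) => n ≤ i.val + p.zp.val
  | .inr (.mk i .tru) => n ≤ i.val + p.tq.val
  | .inr (.mk i .one) => n ≤ i.val + p.oq.val
  | .inr (.mk i .bot) => n ≤ i.val + p.bp.val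

def Valid (n : ℕ) (p : Param n) : Prop :=
  (p.z ≤ p.f) ∧ (p.o ≤ p.r) ∧ (p.fp ≤ p.zp) ∧ (p.tq ≤ p.oq) ∧
  (p.cB.val = 1 → p.b.val = n) ∧
  (p.cF.val = 1 → p.cB.val = 1 ∧ p.f.val = n ∧ p.z.val = n) ∧
  (p.cR.val = 1 → p.cB.val = 1 ∧ p.r.val = n ∧ p.o.val = n) ∧
  (p.cT.val = 1 → p.cF.val = 1 ∧ p.cR.val = 1) ∧
  (p.df.val = 1 → p.f.val = n ∧ p.z.val = n) ∧
  (p.dr.val = 1 → p.r.val = n ∧ p.o.val = n) ∧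
  (p.db.val = 1 → p.df.val = 1 ∧ p.dr.val = 1 ∧ p.b.val = n) ∧
  (1 ≤ p.zp.val → p.df.val = 1 ∧ p.cF.val = 1) ∧
  (1 ≤ p.oq.val → p.dr.val = 1 ∧ p.cR.val = 1) ∧
  (1 ≤ p.bp.val → p.db.val = 1 ∧ p.cB.val = 1) ∧
  (1 ≤ p.tp.val → p.cT.val = 1) ∧
  (1 ≤ p.tp.val + p.zp.val + p.oq.val + p.bp.val)

def decode (p : Param n) : Set (PN n) := {x | pmem p x}

set_option maxHeartbeats 1000000 in
theorem decode_downset (p : Param n) (hp : Valid n p) : IsDownset n (decode p) := by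
  obtain ⟨V1, V2, V3, V4, V5, V6, V7, V8, V9, V10, V11, V12, V13, V14, V15, V16⟩ := hp
  rw [Fin.le_def] at V1 V2 V3 V4
  intro a b hab hb
  rcases a with (a0 | ⟨i, v⟩) | (a0 | ⟨i, v⟩) <;>
    rcases b with (b0 | ⟨j, w⟩) | (b0 | ⟨j, w⟩) <;>
    first
    | (rcases a0 <;> rcases b0 <;>
        simp only [decode, pmem, ple, mr, mr0, mr6, mg, mproj, inM0, msort, Set.mem_setOf_eq,
          Fin.le_def, Fin.val_succ, Fin.val_zero, Fin.ext_iff, Fin.isValue,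
          reduceCtorEq, and_true, true_and, and_false, false_and, or_false, false_or,
          not_false_iff, not_true] at hab hb ⊢ <;> omega)
    | (rcases a0 <;> rcases w <;>
        simp only [decode, pmem, ple, mr, mr0, mr6, mg, mproj, inM0, msort, Set.mem_setOf_eq,
          Fin.le_def, Fin.val_succ, Fin.val_zero, Fin.ext_iff, Fin.isValue,
          reduceCtorEq, and_true, true_and, and_false, false_and, or_false, false_or,
          not_false_iff, not_true] at hab hb ⊢ <;> omega)
    | (rcases v <;> rcases b0 <;>
        simp only [decode, pmem, ple, mr, mr0, mr6, mg, mproj, inM0, msort, Set.mem_setOf_eq,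
          Fin.le_def, Fin.val_succ, Fin.val_zero, Fin.ext_iff, Fin.isValue,
          reduceCtorEq, and_true, true_and, and_false, false_and, or_false, false_or,
          not_false_iff, not_true] at hab hb ⊢ <;> omega)
    | (rcases v <;> rcases w <;>
        simp only [decode, pmem, ple, mr, mr0, mr6, mg, mproj, inM0, msort, Set.mem_setOf_eq,
          Fin.le_def, Fin.val_succ, Fin.val_zero, Fin.ext_iff, Fin.isValue,
          reduceCtorEq, and_true, true_and, and_false, false_and, or_false, false_or,
          not_false_iff, not_true] at hab hb ⊢ <;> omega)



lemma not_inM0_mk (i : Fin n) (v : MSix) : ¬ inM0 (MElt.mk i v : MElt n) := by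
  simp [inM0, msort, Fin.ext_iff]

lemma inM0_m0 (a : MZero) : inM0 (MElt.m0 a : MElt n) := rfl

lemma le_helper {a b : ℕ} (ha : a ≤ n) (h : ∀ i, i < n → i < a → i < b) : a ≤ b := by
  rcases Nat.lt_or_ge b a with hlt | hge
  · have := h b (by omega) (by omega); omega
  · omega

lemma le_helper_suf {a b : ℕ} (ha : a ≤ n) (h : ∀ i, i < n → n ≤ i + a → n ≤ i + b) : a ≤ b := by
  rcases Nat.lt_or_ge b a with hlt | hge
  · have := h (n - a) (by omega) (by omega); omega
  · omega

lemma eq_n_helper {a : ℕ} (hn : 1 ≤ n) (ha : a ≤ n) (h : ∀ i, i < n → i < a) : a = n := by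
  have := h (n-1) (by omega); omega

lemma ext_prefix {a b : ℕ} (ha : a ≤ n) (hb : b ≤ n)
    (h : ∀ i, i < n → (i < a ↔ i < b)) : a = b := by
  rcases Nat.lt_trichotomy a b with hlt | heq | hlt
  · have := h a (by omega); omega
  · exact heq
  · have := h b (by omega); omega

lemma ext_suffix {a b : ℕ} (ha : a ≤ n) (hb : b ≤ n)
    (h : ∀ i, i < n → (n ≤ i + a ↔ n ≤ i + b)) : a = b := by
  rcases Nat.lt_trichotomy a b with hlt | heq | hlt
  · have := h (n - b) (by omega); omega
  · exact heq
  · have := h (n - a) (by omega); omega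

lemma decode_inj (p q : Param n) (h : decode p = decode q) : p = q := by
  rw [Set.ext_iff] at h
  have H : ∀ x, pmem p x ↔ pmem q x := h
  ext
  · refine (ext_prefix (Nat.lt_succ_iff.mp p.b.isLt) (Nat.lt_succ_iff.mp q.b.isLt) fun i hi => ?_)
    simpa [pmem] using H (Sum.inl (MElt.mk ⟨i, hi⟩ .bot))
  · refine (ext_prefix (Nat.lt_succ_iff.mp p.f.isLt) (Nat.lt_succ_iff.mp q.f.isLt) fun i hi => ?_)
    simpa [pmem] using H (Sum.inl (MElt.mk ⟨i, hi⟩ .fls))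
  · refine (ext_prefix (Nat.lt_succ_iff.mp p.z.isLt) (Nat.lt_succ_iff.mp q.z.isLt) fun i hi => ?_)
    simpa [pmem] using H (Sum.inl (MElt.mk ⟨i, hi⟩ .zer))
  · refine (ext_prefix (Nat.lt_succ_iff.mp p.r.isLt) (Nat.lt_succ_iff.mp q.r.isLt) fun i hi => ?_)
    simpa [pmem] using H (Sum.inl (MElt.mk ⟨i, hi⟩ .tru))
  · refine (ext_prefix (Nat.lt_succ_iff.mp p.o.isLt) (Nat.lt_succ_iff.mp q.o.isLt) fun i hi => ?_)
    simpa [pmem] using H (Sum.inl (MElt.mk ⟨i, hi⟩ .one))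
  · refine (ext_suffix (Nat.lt_succ_iff.mp p.tp.isLt) (Nat.lt_succ_iff.mp q.tp.isLt) fun i hi => ?_)
    simpa [pmem] using H (Sum.inr (MElt.mk ⟨i, hi⟩ .top))
  · refine (ext_suffix (Nat.lt_succ_iff.mp p.fp.isLt) (Nat.lt_succ_iff.mp q.fp.isLt) fun i hi => ?_)
    simpa [pmem] using H (Sum.inr (MElt.mk ⟨i, hi⟩ .fls))
  · refine (ext_suffix (Nat.lt_succ_iff.mp p.zp.isLt) (Nat.lt_succ_iff.mp q.zp.isLt) fun i hi => ?_)
    simpa [pmem] using H (Sum.inr (MElt.mk ⟨i, hi⟩ .zer))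
  · refine (ext_suffix (Nat.lt_succ_iff.mp p.tq.isLt) (Nat.lt_succ_iff.mp q.tq.isLt) fun i hi => ?_)
    simpa [pmem] using H (Sum.inr (MElt.mk ⟨i, hi⟩ .tru))
  · refine (ext_suffix (Nat.lt_succ_iff.mp p.oq.isLt) (Nat.lt_succ_iff.mp q.oq.isLt) fun i hi => ?_)
    simpa [pmem] using H (Sum.inr (MElt.mk ⟨i, hi⟩ .one))
  · refine (ext_suffix (Nat.lt_succ_iff.mp p.bp.isLt) (Nat.lt_succ_iff.mp q.bp.isLt) fun i hi => ?_)
    simpa [pmem] using H (Sum.inr (MElt.mk ⟨i, hi⟩ .bot))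
  · have h1 := H (Sum.inl (MElt.m0 .bot)); simp only [pmem] at h1
    omega
  · have h1 := H (Sum.inl (MElt.m0 .fls)); simp only [pmem] at h1
    omega
  · have h1 := H (Sum.inl (MElt.m0 .tru)); simp only [pmem] at h1
    omega
  · have h1 := H (Sum.inl (MElt.m0 .top)); simp only [pmem] at h1
    omega
  · have h1 := H (Sum.inr (MElt.m0 .fls)); simp only [pmem] at h1
    omega
  · have h1 := H (Sum.inr (MElt.m0 .tru)); simp only [pmem] at h1
    omega
  · have h1 := H (Sum.inr (MElt.m0 .bot)); simp only [pmem] at h1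
    omega

lemma decode_meets (hn : 1 ≤ n) (p : Param n) (hp : Valid n p) :
    decode p ∩ Tset n ≠ ∅ := by
  obtain ⟨V1, V2, V3, V4, V5, V6, V7, V8, V9, V10, V11, V12, V13, V14, V15, V16⟩ := hp
  rw [← Set.nonempty_iff_ne_empty]
  have hi : n - 1 < n := by omega
  have hcase : 1 ≤ p.tp.val ∨ 1 ≤ p.zp.val ∨ 1 ≤ p.oq.val ∨ 1 ≤ p.bp.val := by omega
  rcases hcase with h | h | h | h
  · exact ⟨Sum.inr (MElt.mk ⟨n-1, hi⟩ .top), by simp only [decode, pmem, Set.mem_setOf_eq]; omega,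
      ⟨MElt.mk ⟨n-1, hi⟩ .top, not_inM0_mk _ _, rfl⟩⟩
  · exact ⟨Sum.inr (MElt.mk ⟨n-1, hi⟩ .zer), by simp only [decode, pmem, Set.mem_setOf_eq]; omega,
      ⟨MElt.mk ⟨n-1, hi⟩ .zer, not_inM0_mk _ _, rfl⟩⟩
  · exact ⟨Sum.inr (MElt.mk ⟨n-1, hi⟩ .one), by simp only [decode, pmem, Set.mem_setOf_eq]; omega,
      ⟨MElt.mk ⟨n-1, hi⟩ .one, not_inM0_mk _ _, rfl⟩⟩
  · exact ⟨Sum.inr (MElt.mk ⟨n-1, hi⟩ .bot), by simp only [decode, pmem, Set.mem_setOf_eq]; omega,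
      ⟨MElt.mk ⟨n-1, hi⟩ .bot, not_inM0_mk _ _, rfl⟩⟩

lemma flag_param (P : Prop) : ∃ c : Fin 2, (c.val = 1 ↔ P) := by
  classical
  exact if h : P then ⟨1, by simp [h]⟩ else ⟨0, by simp [h]⟩

lemma prefix_param (S : Set (Fin n)) (hS : ∀ i j : Fin n, i ≤ j → j ∈ S → i ∈ S) :
    ∃ c : Fin (n+1), ∀ i : Fin n, i ∈ S ↔ i.val < c.val := by
  classical
  set F : Finset (Fin n) := Finset.univ.filter (fun i => i ∈ S) with hF
  by_cases hne : F.Nonempty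
  · refine ⟨⟨(F.max' hne).val + 1, by have := (F.max' hne).isLt; omega⟩, fun i => ?_⟩
    show i ∈ S ↔ i.val < (F.max' hne).val + 1
    constructor
    · intro hi
      have h1 : i ≤ F.max' hne := Finset.le_max' F i (by simp [hF, hi])
      rw [Fin.le_def] at h1; omega
    · intro hi
      have hm : F.max' hne ∈ S := by have := F.max'_mem hne; simpa [hF] using this
      exact hS i (F.max' hne) (by rw [Fin.le_def]; omega) hm
  · refine ⟨0, fun i => ?_⟩
    show i ∈ S ↔ i.val < 0
    constructor
    · intro hi; exact absurd ⟨i, by simp [hF, hi]⟩ hne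
    · omega

lemma suffix_param (S : Set (Fin n)) (hS : ∀ i j : Fin n, i ≤ j → i ∈ S → j ∈ S) :
    ∃ c : Fin (n+1), ∀ i : Fin n, i ∈ S ↔ n ≤ i.val + c.val := by
  classical
  set F : Finset (Fin n) := Finset.univ.filter (fun i => i ∈ S) with hF
  by_cases hne : F.Nonempty
  · have hmlt := (F.min' hne).isLt
    refine ⟨⟨n - (F.min' hne).val, by omega⟩, fun i => ?_⟩
    show i ∈ S ↔ n ≤ i.val + (n - (F.min' hne).val)
    constructor
    · intro hi
      have h1 : F.min' hne ≤ i := Finset.min'_le F i (by simp [hF, hi])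
      rw [Fin.le_def] at h1; omega
    · intro hi
      have hm : F.min' hne ∈ S := by have := F.min'_mem hne; simpa [hF] using this
      exact hS (F.min' hne) i (by rw [Fin.le_def]; omega) hm
  · refine ⟨0, fun i => ?_⟩
    have := i.isLt
    show i ∈ S ↔ n ≤ i.val + 0
    constructor
    · intro hi; exact absurd ⟨i, by simp [hF, hi]⟩ hne
    · omega


lemma mem_down {U : Set (PN n)} (hD : IsDownset n U) {b : PN n} (hb : b ∈ U)
    (a : PN n) (h : ple n a b) : a ∈ U := hD a b h hb

theorem decode_surj (hn : 1 ≤ n) (U : Set (PN n)) (hD : IsDownset n U) (hT : U ∩ Tset n ≠ ∅) :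
    ∃ p : Param n, Valid n p ∧ decode p = U := by
  classical
  rw [← Set.nonempty_iff_ne_empty] at hT
  obtain ⟨x0, hx0U, x1, hx1M, hx1e⟩ := hT
  subst hx1e
  obtain ⟨a⟩ | ⟨j0, w0⟩ := x1
  · exact absurd (inM0_m0 a) hx1M
  have hRtop : Sum.inr (MElt.m0 MZero.top) ∈ U :=
    mem_down hD hx0U (Sum.inr (MElt.m0 MZero.top))
      (Or.inr ⟨inM0_m0 _, not_inM0_mk _ _, Or.inl rfl⟩)
  have hLtop : ∀ i : Fin n, Sum.inl (MElt.mk i MSix.top) ∈ U := fun i =>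
    mem_down hD hRtop (Sum.inl (MElt.mk i MSix.top))
      (Or.inl ⟨not_inM0_mk _ _, inM0_m0 _, Or.inl rfl⟩)
  obtain ⟨cb, hcb⟩ := prefix_param {i : Fin n | Sum.inl (MElt.mk i MSix.bot) ∈ U}
    (fun i j hij hj => mem_down hD hj (Sum.inl (MElt.mk i MSix.bot)) (Or.inl ⟨hij, Or.inl rfl⟩))
  obtain ⟨cf, hcf⟩ := prefix_param {i : Fin n | Sum.inl (MElt.mk i MSix.fls) ∈ U}
    (fun i j hij hj => mem_down hD hj (Sum.inl (MElt.mk i MSix.fls)) (Or.inl ⟨hij, Or.inl rfl⟩))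
  obtain ⟨cz, hcz⟩ := prefix_param {i : Fin n | Sum.inl (MElt.mk i MSix.zer) ∈ U}
    (fun i j hij hj => mem_down hD hj (Sum.inl (MElt.mk i MSix.zer)) (Or.inl ⟨hij, Or.inl rfl⟩))
  obtain ⟨cr, hcr⟩ := prefix_param {i : Fin n | Sum.inl (MElt.mk i MSix.tru) ∈ U}
    (fun i j hij hj => mem_down hD hj (Sum.inl (MElt.mk i MSix.tru)) (Or.inl ⟨hij, Or.inl rfl⟩))
  obtain ⟨co, hco⟩ := prefix_param {i : Fin n | Sum.inl (MElt.mk i MSix.one) ∈ U}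
    (fun i j hij hj => mem_down hD hj (Sum.inl (MElt.mk i MSix.one)) (Or.inl ⟨hij, Or.inl rfl⟩))
  obtain ⟨ctp, hctp⟩ := suffix_param {i : Fin n | Sum.inr (MElt.mk i MSix.top) ∈ U}
    (fun i j hij hi => mem_down hD hi (Sum.inr (MElt.mk j MSix.top)) (Or.inl ⟨hij, Or.inl rfl⟩))
  obtain ⟨cfp, hcfp⟩ := suffix_param {i : Fin n | Sum.inr (MElt.mk i MSix.fls) ∈ U}
    (fun i j hij hi => mem_down hD hi (Sum.inr (MElt.mk j MSix.fls)) (Or.inl ⟨hij, Or.inl rfl⟩))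
  obtain ⟨czp, hczp⟩ := suffix_param {i : Fin n | Sum.inr (MElt.mk i MSix.zer) ∈ U}
    (fun i j hij hi => mem_down hD hi (Sum.inr (MElt.mk j MSix.zer)) (Or.inl ⟨hij, Or.inl rfl⟩))
  obtain ⟨ctq, hctq⟩ := suffix_param {i : Fin n | Sum.inr (MElt.mk i MSix.tru) ∈ U}
    (fun i j hij hi => mem_down hD hi (Sum.inr (MElt.mk j MSix.tru)) (Or.inl ⟨hij, Or.inl rfl⟩))
  obtain ⟨coq, hcoq⟩ := suffix_param {i : Fin n | Sum.inr (MElt.mk i MSix.one) ∈ U}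
    (fun i j hij hi => mem_down hD hi (Sum.inr (MElt.mk j MSix.one)) (Or.inl ⟨hij, Or.inl rfl⟩))
  obtain ⟨cbp, hcbp⟩ := suffix_param {i : Fin n | Sum.inr (MElt.mk i MSix.bot) ∈ U}
    (fun i j hij hi => mem_down hD hi (Sum.inr (MElt.mk j MSix.bot)) (Or.inl ⟨hij, Or.inl rfl⟩))
  obtain ⟨xB, hxB⟩ := flag_param (Sum.inl (MElt.m0 MZero.bot) ∈ U)
  obtain ⟨xF, hxF⟩ := flag_param (Sum.inl (MElt.m0 MZero.fls) ∈ U)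
  obtain ⟨xR, hxR⟩ := flag_param (Sum.inl (MElt.m0 MZero.tru) ∈ U)
  obtain ⟨xT, hxT⟩ := flag_param (Sum.inl (MElt.m0 MZero.top) ∈ U)
  obtain ⟨yf, hyf⟩ := flag_param (Sum.inr (MElt.m0 MZero.fls) ∈ U)
  obtain ⟨yr, hyr⟩ := flag_param (Sum.inr (MElt.m0 MZero.tru) ∈ U)
  obtain ⟨yb, hyb⟩ := flag_param (Sum.inr (MElt.m0 MZero.bot) ∈ U)
  refine ⟨⟨cb, cf, cz, cr, co, ctp, cfp, czp, ctq, coq, cbp, xB, xF, xR, xT, yf, yr, yb⟩,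
    ⟨?_, ?_, ?_, ?_, ?_, ?_, ?_, ?_, ?_, ?_, ?_, ?_, ?_, ?_, ?_, ?_⟩, ?_⟩
  · rw [Fin.le_def]
    refine le_helper (Nat.lt_succ_iff.mp cz.isLt) fun i hi h1 => ?_
    exact (hcf ⟨i, hi⟩).mp (mem_down hD ((hcz ⟨i, hi⟩).mpr h1)
      (Sum.inl (MElt.mk ⟨i, hi⟩ MSix.fls)) (Or.inl ⟨le_refl _, Or.inr (Or.inl ⟨rfl, rfl⟩)⟩))
  · rw [Fin.le_def]
    refine le_helper (Nat.lt_succ_iff.mp co.isLt) fun i hi h1 => ?_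
    exact (hcr ⟨i, hi⟩).mp (mem_down hD ((hco ⟨i, hi⟩).mpr h1)
      (Sum.inl (MElt.mk ⟨i, hi⟩ MSix.tru)) (Or.inl ⟨le_refl _, Or.inr (Or.inr ⟨rfl, rfl⟩)⟩))
  · rw [Fin.le_def]
    refine le_helper_suf (Nat.lt_succ_iff.mp cfp.isLt) fun i hi h1 => ?_
    exact (hczp ⟨i, hi⟩).mp (mem_down hD ((hcfp ⟨i, hi⟩).mpr h1)
      (Sum.inr (MElt.mk ⟨i, hi⟩ MSix.zer)) (Or.inl ⟨le_refl _, Or.inr (Or.inl ⟨rfl, rfl⟩)⟩))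
  · rw [Fin.le_def]
    refine le_helper_suf (Nat.lt_succ_iff.mp ctq.isLt) fun i hi h1 => ?_
    exact (hcoq ⟨i, hi⟩).mp (mem_down hD ((hctq ⟨i, hi⟩).mpr h1)
      (Sum.inr (MElt.mk ⟨i, hi⟩ MSix.one)) (Or.inl ⟨le_refl _, Or.inr (Or.inr ⟨rfl, rfl⟩)⟩))
  · intro hc
    refine eq_n_helper hn (Nat.lt_succ_iff.mp cb.isLt) fun i hi => ?_
    exact (hcb ⟨i, hi⟩).mp (mem_down hD (hxB.mp hc) (Sum.inl (MElt.mk ⟨i, hi⟩ MSix.bot))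
      (Or.inr ⟨not_inM0_mk _ _, inM0_m0 _, Or.inr (Or.inl rfl)⟩))
  · intro hc
    have hfls := hxF.mp hc
    refine ⟨hxB.mpr (mem_down hD hfls (Sum.inl (MElt.m0 MZero.bot))
      (Or.inl (Or.inr (Or.inl rfl)))), ?_, ?_⟩
    · refine eq_n_helper hn (Nat.lt_succ_iff.mp cf.isLt) fun i hi => ?_
      exact (hcf ⟨i, hi⟩).mp (mem_down hD hfls (Sum.inl (MElt.mk ⟨i, hi⟩ MSix.fls))
        (Or.inr ⟨not_inM0_mk _ _, inM0_m0 _, Or.inr (Or.inr rfl)⟩))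
    · refine eq_n_helper hn (Nat.lt_succ_iff.mp cz.isLt) fun i hi => ?_
      exact (hcz ⟨i, hi⟩).mp (mem_down hD hfls (Sum.inl (MElt.mk ⟨i, hi⟩ MSix.zer))
        (Or.inr ⟨not_inM0_mk _ _, inM0_m0 _, Or.inr (Or.inr rfl)⟩))
  · intro hc
    have htru := hxR.mp hc
    refine ⟨hxB.mpr (mem_down hD htru (Sum.inl (MElt.m0 MZero.bot))
      (Or.inl (Or.inr (Or.inl rfl)))), ?_, ?_⟩
    · refine eq_n_helper hn (Nat.lt_succ_iff.mp cr.isLt) fun i hi => ?_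
      exact (hcr ⟨i, hi⟩).mp (mem_down hD htru (Sum.inl (MElt.mk ⟨i, hi⟩ MSix.tru))
        (Or.inr ⟨not_inM0_mk _ _, inM0_m0 _, Or.inr (Or.inr rfl)⟩))
    · refine eq_n_helper hn (Nat.lt_succ_iff.mp co.isLt) fun i hi => ?_
      exact (hco ⟨i, hi⟩).mp (mem_down hD htru (Sum.inl (MElt.mk ⟨i, hi⟩ MSix.one))
        (Or.inr ⟨not_inM0_mk _ _, inM0_m0 _, Or.inr (Or.inr rfl)⟩))
  · intro hc
    have htop := hxT.mp hc
    exact ⟨hxF.mpr (mem_down hD htop (Sum.inl (MElt.m0 MZero.fls)) (Or.inl (Or.inl rfl))),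
      hxR.mpr (mem_down hD htop (Sum.inl (MElt.m0 MZero.tru)) (Or.inl (Or.inl rfl)))⟩
  · intro hc
    have hf0 := hyf.mp hc
    constructor
    · refine eq_n_helper hn (Nat.lt_succ_iff.mp cf.isLt) fun i hi => ?_
      exact (hcf ⟨i, hi⟩).mp (mem_down hD hf0 (Sum.inl (MElt.mk ⟨i, hi⟩ MSix.fls))
        (Or.inl ⟨not_inM0_mk _ _, inM0_m0 _, Or.inr (Or.inr rfl)⟩))
    · refine eq_n_helper hn (Nat.lt_succ_iff.mp cz.isLt) fun i hi => ?_
      exact (hcz ⟨i, hi⟩).mp (mem_down hD hf0 (Sum.inl (MElt.mk ⟨i, hi⟩ MSix.zer))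
        (Or.inl ⟨not_inM0_mk _ _, inM0_m0 _, Or.inr (Or.inr rfl)⟩))
  · intro hc
    have hr0 := hyr.mp hc
    constructor
    · refine eq_n_helper hn (Nat.lt_succ_iff.mp cr.isLt) fun i hi => ?_
      exact (hcr ⟨i, hi⟩).mp (mem_down hD hr0 (Sum.inl (MElt.mk ⟨i, hi⟩ MSix.tru))
        (Or.inl ⟨not_inM0_mk _ _, inM0_m0 _, Or.inr (Or.inr rfl)⟩))
    · refine eq_n_helper hn (Nat.lt_succ_iff.mp co.isLt) fun i hi => ?_
      exact (hco ⟨i, hi⟩).mp (mem_down hD hr0 (Sum.inl (MElt.mk ⟨i, hi⟩ MSix.one))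
        (Or.inl ⟨not_inM0_mk _ _, inM0_m0 _, Or.inr (Or.inr rfl)⟩))
  · intro hc
    have hb0 := hyb.mp hc
    refine ⟨hyf.mpr (mem_down hD hb0 (Sum.inr (MElt.m0 MZero.fls))
        (Or.inl (Or.inr (Or.inl rfl)))),
      hyr.mpr (mem_down hD hb0 (Sum.inr (MElt.m0 MZero.tru))
        (Or.inl (Or.inr (Or.inl rfl)))), ?_⟩
    refine eq_n_helper hn (Nat.lt_succ_iff.mp cb.isLt) fun i hi => ?_
    exact (hcb ⟨i, hi⟩).mp (mem_down hD hb0 (Sum.inl (MElt.mk ⟨i, hi⟩ MSix.bot))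
      (Or.inl ⟨not_inM0_mk _ _, inM0_m0 _, Or.inr (Or.inl rfl)⟩))
  · show 1 ≤ czp.val → yf.val = 1 ∧ xF.val = 1
    intro h
    have hz : Sum.inr (MElt.mk ⟨n-1, by omega⟩ MSix.zer) ∈ U :=
      (hczp ⟨n-1, by omega⟩).mpr (show n ≤ n - 1 + czp.val by omega)
    exact ⟨hyf.mpr (mem_down hD hz (Sum.inr (MElt.m0 MZero.fls))
        (Or.inr ⟨inM0_m0 _, not_inM0_mk _ _, Or.inr (Or.inr rfl)⟩)),
      hxF.mpr (mem_down hD hz (Sum.inl (MElt.m0 MZero.fls))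
        (Or.inr (Or.inl ⟨inM0_m0 _, not_inM0_mk _ _, Or.inr (Or.inr rfl)⟩)))⟩
  · show 1 ≤ coq.val → yr.val = 1 ∧ xR.val = 1
    intro h
    have ho : Sum.inr (MElt.mk ⟨n-1, by omega⟩ MSix.one) ∈ U :=
      (hcoq ⟨n-1, by omega⟩).mpr (show n ≤ n - 1 + coq.val by omega)
    exact ⟨hyr.mpr (mem_down hD ho (Sum.inr (MElt.m0 MZero.tru))
        (Or.inr ⟨inM0_m0 _, not_inM0_mk _ _, Or.inr (Or.inr rfl)⟩)),
      hxR.mpr (mem_down hD ho (Sum.inl (MElt.m0 MZero.tru))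
        (Or.inr (Or.inl ⟨inM0_m0 _, not_inM0_mk _ _, Or.inr (Or.inr rfl)⟩)))⟩
  · show 1 ≤ cbp.val → yb.val = 1 ∧ xB.val = 1
    intro h
    have hb : Sum.inr (MElt.mk ⟨n-1, by omega⟩ MSix.bot) ∈ U :=
      (hcbp ⟨n-1, by omega⟩).mpr (show n ≤ n - 1 + cbp.val by omega)
    exact ⟨hyb.mpr (mem_down hD hb (Sum.inr (MElt.m0 MZero.bot))
        (Or.inr ⟨inM0_m0 _, not_inM0_mk _ _, Or.inr (Or.inl rfl)⟩)),
      hxB.mpr (mem_down hD hb (Sum.inl (MElt.m0 MZero.bot))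
        (Or.inr (Or.inl ⟨inM0_m0 _, not_inM0_mk _ _, Or.inr (Or.inl rfl)⟩)))⟩
  · show 1 ≤ ctp.val → xT.val = 1
    intro h
    have ht : Sum.inr (MElt.mk ⟨n-1, by omega⟩ MSix.top) ∈ U :=
      (hctp ⟨n-1, by omega⟩).mpr (show n ≤ n - 1 + ctp.val by omega)
    exact hxT.mpr (mem_down hD ht (Sum.inl (MElt.m0 MZero.top))
      (Or.inr (Or.inl ⟨inM0_m0 _, not_inM0_mk _ _, Or.inl rfl⟩)))
  · show 1 ≤ ctp.val + czp.val + coq.val + cbp.val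
    have hjlt := j0.isLt
    cases w0 with
    | top => have := (hctp j0).mp hx0U; omega
    | fls =>
        have h2 := (hczp j0).mp (mem_down hD hx0U (Sum.inr (MElt.mk j0 MSix.zer))
          (Or.inl ⟨le_refl _, Or.inr (Or.inl ⟨rfl, rfl⟩)⟩))
        omega
    | zer => have := (hczp j0).mp hx0U; omega
    | tru =>
        have h2 := (hcoq j0).mp (mem_down hD hx0U (Sum.inr (MElt.mk j0 MSix.one))
          (Or.inl ⟨le_refl _, Or.inr (Or.inr ⟨rfl, rfl⟩)⟩))
        omega
    | one => have := (hcoq j0).mp hx0U; omega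
    | bot => have := (hcbp j0).mp hx0U; omega
  · ext x
    rcases x with (a0 | ⟨i, v⟩) | (a0 | ⟨i, v⟩)
    · cases a0 with
      | top => exact hxT
      | fls => exact hxF
      | tru => exact hxR
      | bot => exact hxB
    · cases v with
      | top => exact iff_of_true trivial (hLtop i)
      | fls => exact (hcf i).symm
      | zer => exact (hcz i).symm
      | tru => exact (hcr i).symm
      | one => exact (hco i).symm
      | bot => exact (hcb i).symm
    · cases a0 with
      | top => exact iff_of_true trivial hRtop
      | fls => exact hyf
      | tru => exact hyr
      | bot => exact hyb
    · cases v with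
      | top => exact (hctp i).symm
      | fls => exact (hcfp i).symm
      | zer => exact (hczp i).symm
      | tru => exact (hctq i).symm
      | one => exact (hcoq i).symm
      | bot => exact (hcbp i).symm


/-! ### counting -/

abbrev Flags : Type := Fin 2 × Fin 2 × Fin 2 × Fin 2 × Fin 2 × Fin 2 × Fin 2

abbrev Cols (n : ℕ) : Type :=
  Fin (n+1) × (Fin (n+1) × Fin (n+1)) × (Fin (n+1) × Fin (n+1)) ×
    (Fin (n+1) × Fin (n+1)) × (Fin (n+1) × Fin (n+1)) × Fin (n+1) × Fin (n+1)

-- flag components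
def gcB (fl : Flags) : Fin 2 := fl.1
def gcF (fl : Flags) : Fin 2 := fl.2.1
def gcR (fl : Flags) : Fin 2 := fl.2.2.1
def gcT (fl : Flags) : Fin 2 := fl.2.2.2.1
def gdf (fl : Flags) : Fin 2 := fl.2.2.2.2.1
def gdr (fl : Flags) : Fin 2 := fl.2.2.2.2.2.1
def gdb (fl : Flags) : Fin 2 := fl.2.2.2.2.2.2

def fOK (fl : Flags) : Prop :=
  ((gcF fl).val = 1 → (gcB fl).val = 1) ∧ ((gcR fl).val = 1 → (gcB fl).val = 1) ∧
  ((gcT fl).val = 1 → (gcF fl).val = 1 ∧ (gcR fl).val = 1) ∧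
  ((gdb fl).val = 1 → (gdf fl).val = 1 ∧ (gdr fl).val = 1)

instance (fl : Flags) : Decidable (fOK fl) := by unfold fOK; infer_instance

def Pone (n : ℕ) (c : Prop) (x : Fin (n+1)) : Prop := c → x.val = n
def Psuf1 (n : ℕ) (c : Prop) (x : Fin (n+1)) : Prop := ¬ c → x.val = 0
def Ppair (n : ℕ) (c : Prop) (x : Fin (n+1) × Fin (n+1)) : Prop :=
  x.2.val ≤ x.1.val ∧ (c → x.1.val = n ∧ x.2.val = n)
def Psuf2 (n : ℕ) (c : Prop) (x : Fin (n+1) × Fin (n+1)) : Prop :=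
  x.2.val ≤ x.1.val ∧ (¬ c → x.1.val = 0)

def cond_b (fl : Flags) : Prop := (gcB fl).val = 1 ∨ (gdb fl).val = 1
def cond_f (fl : Flags) : Prop := (gcF fl).val = 1 ∨ (gdf fl).val = 1
def cond_r (fl : Flags) : Prop := (gcR fl).val = 1 ∨ (gdr fl).val = 1
def cond_zp (fl : Flags) : Prop := (gdf fl).val = 1 ∧ (gcF fl).val = 1
def cond_oq (fl : Flags) : Prop := (gdr fl).val = 1 ∧ (gcR fl).val = 1
def cond_tp (fl : Flags) : Prop := (gcT fl).val = 1
def cond_bp (fl : Flags) : Prop := (gdb fl).val = 1 ∧ (gcB fl).val = 1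

instance (fl : Flags) : Decidable (cond_b fl) := by unfold cond_b; infer_instance
instance (fl : Flags) : Decidable (cond_f fl) := by unfold cond_f; infer_instance
instance (fl : Flags) : Decidable (cond_r fl) := by unfold cond_r; infer_instance
instance (fl : Flags) : Decidable (cond_zp fl) := by unfold cond_zp; infer_instance
instance (fl : Flags) : Decidable (cond_oq fl) := by unfold cond_oq; infer_instance
instance (fl : Flags) : Decidable (cond_tp fl) := by unfold cond_tp; infer_instance
instance (fl : Flags) : Decidable (cond_bp fl) := by unfold cond_bp; infer_instance

def cOK (n : ℕ) (fl : Flags) (co : Cols n) : Prop :=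
  Pone n (cond_b fl) co.1 ∧ Ppair n (cond_f fl) co.2.1 ∧ Ppair n (cond_r fl) co.2.2.1 ∧
  Psuf2 n (cond_zp fl) co.2.2.2.1 ∧ Psuf2 n (cond_oq fl) co.2.2.2.2.1 ∧
  Psuf1 n (cond_tp fl) co.2.2.2.2.2.1 ∧ Psuf1 n (cond_bp fl) co.2.2.2.2.2.2

def NEc (n : ℕ) (co : Cols n) : Prop :=
  1 ≤ co.2.2.2.1.1.val + co.2.2.2.2.1.1.val + co.2.2.2.2.2.1.val + co.2.2.2.2.2.2.val

def cZ (n : ℕ) (fl : Flags) (co : Cols n) : Prop :=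
  Pone n (cond_b fl) co.1 ∧ Ppair n (cond_f fl) co.2.1 ∧ Ppair n (cond_r fl) co.2.2.1 ∧
  (co.2.2.2.1 = ((0 : Fin (n+1)), (0 : Fin (n+1)))) ∧
  (co.2.2.2.2.1 = ((0 : Fin (n+1)), (0 : Fin (n+1)))) ∧
  (co.2.2.2.2.2.1 = (0 : Fin (n+1))) ∧ (co.2.2.2.2.2.2 = (0 : Fin (n+1)))

def paramEquiv : Param n ≃ Flags × Cols n where
  toFun p := ((p.cB, p.cF, p.cR, p.cT, p.df, p.dr, p.db),
    (p.b, (p.f, p.z), (p.r, p.o), (p.zp, p.fp), (p.oq, p.tq), p.tp, p.bp))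
  invFun x := ⟨x.2.1, x.2.2.1.1, x.2.2.1.2, x.2.2.2.1.1, x.2.2.2.1.2,
    x.2.2.2.2.2.2.1, x.2.2.2.2.1.2, x.2.2.2.2.1.1, x.2.2.2.2.2.1.2, x.2.2.2.2.2.1.1,
    x.2.2.2.2.2.2.2, x.1.1, x.1.2.1, x.1.2.2.1, x.1.2.2.2.1, x.1.2.2.2.2.1,
    x.1.2.2.2.2.2.1, x.1.2.2.2.2.2.2⟩
  left_inv p := rfl
  right_inv x := rfl

lemma valid_iff (p : Param n) :
    Valid n p ↔ fOK (paramEquiv p).1 ∧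
      (cOK n (paramEquiv p).1 (paramEquiv p).2 ∧ NEc n (paramEquiv p).2) := by
  obtain ⟨b, f, z, r, o, tp, fp, zp, tq, oq, bp, cB, cF, cR, cT, df, dr, db⟩ := p
  simp only [Valid, paramEquiv, fOK, cOK, NEc, Pone, Ppair, Psuf1, Psuf2,
    cond_b, cond_f, cond_r, cond_zp, cond_oq, cond_tp, cond_bp,
    gcB, gcF, gcR, gcT, gdf, gdr, gdb, Fin.le_def, Equiv.coe_fn_mk]
  omega

lemma mainsplit_iff (x : Flags × Cols n) :
    (fOK x.1 ∧ cOK n x.1 x.2) ↔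
      ((fOK x.1 ∧ (cOK n x.1 x.2 ∧ NEc n x.2)) ∨ (fOK x.1 ∧ cZ n x.1 x.2)) := by
  obtain ⟨fl, b, fz, ro, zf, ot, tp, bp⟩ := x
  simp only [cOK, cZ, NEc, Pone, Ppair, Psuf1, Psuf2, Prod.ext_iff, Fin.ext_iff, Fin.val_zero]
  constructor
  · rintro ⟨h1, h2⟩
    by_cases hne : 1 ≤ zf.1.val + ot.1.val + tp.val + bp.val
    · exact Or.inl ⟨h1, h2, hne⟩
    · refine Or.inr ⟨h1, h2.1, h2.2.1, h2.2.2.1, ?_⟩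
      obtain ⟨-, -, -, h4, h5, -, -⟩ := h2
      refine ⟨⟨by omega, by omega⟩, ⟨by omega, by omega⟩, by omega, by omega⟩
  · rintro (⟨h1, h2, -⟩ | ⟨h1, h2, h3, h4, h5, h6, h7, h8⟩)
    · exact ⟨h1, h2⟩
    · exact ⟨h1, h2, h3, h4, by constructor <;> omega, by constructor <;> omega,
        by omega, by omega⟩



instance (c : Prop) [Decidable c] (x : Fin (n+1)) : Decidable (Pone n c x) := by
  unfold Pone; infer_instance
instance (c : Prop) [Decidable c] (x : Fin (n+1)) : Decidable (Psuf1 n c x) := by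
  unfold Psuf1; infer_instance
instance (c : Prop) [Decidable c] (x : Fin (n+1) × Fin (n+1)) : Decidable (Ppair n c x) := by
  unfold Ppair; infer_instance
instance (c : Prop) [Decidable c] (x : Fin (n+1) × Fin (n+1)) : Decidable (Psuf2 n c x) := by
  unfold Psuf2; infer_instance
instance (fl : Flags) (co : Cols n) : Decidable (cOK n fl co) := by unfold cOK; infer_instance
instance (fl : Flags) (co : Cols n) : Decidable (cZ n fl co) := by unfold cZ; infer_instance
instance (co : Cols n) : Decidable (NEc n co) := by unfold NEc; infer_instance

noncomputable def subtypeOrSum {α : Type*} (P Q : α → Prop) (h : ∀ a, ¬(P a ∧ Q a)) :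
    {a // P a ∨ Q a} ≃ {a // P a} ⊕ {a // Q a} := by
  classical
  exact
  { toFun := fun a => if h' : P a.1 then .inl ⟨a.1, h'⟩ else .inr ⟨a.1, a.2.resolve_left h'⟩
    invFun := Sum.elim (fun x => ⟨x.1, Or.inl x.2⟩) (fun x => ⟨x.1, Or.inr x.2⟩)
    left_inv := fun a => by by_cases h' : P a.1 <;> simp [h']
    right_inv := fun x => by
      rcases x with x | x
      · simp [x.2]
      · have hx : ¬ P x.1 := fun hP => h x.1 ⟨hP, x.2⟩
        simp [hx] }

lemma card_fin_eq {α : Type*} [DecidableEq α] [Fintype α] (a : α) :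
    Nat.card {x : α // x = a} = 1 := by
  rw [Nat.card_eq_fintype_card, Fintype.card_subtype_eq]

lemma card_Pone (c : Prop) [Decidable c] :
    Nat.card {x : Fin (n+1) // Pone n c x} = if c then 1 else (n+1) := by
  by_cases h : c
  · rw [if_pos h, Nat.card_congr (Equiv.subtypeEquivRight
      (q := fun x : Fin (n+1) => x = ⟨n, by omega⟩)
      (fun x => by simp [Pone, h, Fin.ext_iff]))]
    exact card_fin_eq _
  · rw [if_neg h, Nat.card_congr (Equiv.subtypeUnivEquiv (fun x => by simp [Pone, h]))]
    simp [Nat.card_eq_fintype_card]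

lemma card_Psuf1 (c : Prop) [Decidable c] :
    Nat.card {x : Fin (n+1) // Psuf1 n c x} = if c then (n+1) else 1 := by
  by_cases h : c
  · rw [if_pos h, Nat.card_congr (Equiv.subtypeUnivEquiv (fun x => by simp [Psuf1, h]))]
    simp [Nat.card_eq_fintype_card]
  · rw [if_neg h, Nat.card_congr (Equiv.subtypeEquivRight
      (q := fun x : Fin (n+1) => x = 0)
      (fun x => by simp [Psuf1, h]))]
    exact card_fin_eq _

noncomputable def tri (n : ℕ) : ℕ := Nat.card {x : Fin (n+1) × Fin (n+1) // x.2.val ≤ x.1.val}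

lemma card_Ppair (c : Prop) [Decidable c] :
    Nat.card {x : Fin (n+1) × Fin (n+1) // Ppair n c x} = if c then 1 else tri n := by
  by_cases h : c
  · rw [if_pos h, Nat.card_congr (Equiv.subtypeEquivRight
      (q := fun x : Fin (n+1) × Fin (n+1) => x = (⟨n, by omega⟩, ⟨n, by omega⟩))
      (fun x => by simp only [Ppair, h, true_implies, Prod.ext_iff, Fin.ext_iff]; omega))]
    exact card_fin_eq _
  · rw [if_neg h]
    exact Nat.card_congr (Equiv.subtypeEquivRight (fun x => by simp [Ppair, h]))

lemma card_Psuf2 (c : Prop) [Decidable c] :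
    Nat.card {x : Fin (n+1) × Fin (n+1) // Psuf2 n c x} = if c then tri n else 1 := by
  by_cases h : c
  · rw [if_pos h]
    exact Nat.card_congr (Equiv.subtypeEquivRight (fun x => by simp [Psuf2, h]))
  · rw [if_neg h, Nat.card_congr (Equiv.subtypeEquivRight
      (q := fun x : Fin (n+1) × Fin (n+1) => x = (0, 0))
      (fun x => by simp only [Psuf2, h, not_false_iff, true_implies, Prod.ext_iff,
        Fin.ext_iff, Fin.val_zero]; omega))]
    exact card_fin_eq _

lemma two_tri : 2 * tri n = (n+1)*(n+2) := by
  have e2 : ∀ a : Fin (n+1), {b : Fin (n+1) // b.val ≤ a.val} ≃ Fin (a.val+1) := fun a =>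
    { toFun := fun b => ⟨b.1.val, by omega⟩
      invFun := fun y => ⟨⟨y.val, by have h1 := y.isLt; have h2 := a.isLt; omega⟩,
        by have h1 := y.isLt; simp; omega⟩
      left_inv := fun b => rfl
      right_inv := fun y => rfl }
  have : tri n = ∑ a : Fin (n+1), (a.val + 1) := by
    rw [tri, Nat.card_congr (Equiv.subtypeProdEquivSigmaSubtype
      (fun (a b : Fin (n+1)) => b.val ≤ a.val)), Nat.card_eq_fintype_card,
      Fintype.card_sigma]
    exact Finset.sum_congr rfl fun a _ => by
      rw [Fintype.card_congr (e2 a), Fintype.card_fin]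
  rw [this, Fin.sum_univ_eq_sum_range (fun i => i + 1) (n+1), Finset.sum_add_distrib,
    Finset.sum_const, Finset.card_range, smul_eq_mul, mul_one]
  have h : (∑ i ∈ Finset.range (n+1), i) * 2 = (n+1) * n := by
    simpa using Finset.sum_range_id_mul_two (n+1)
  nlinarith [h]



def colsEquiv (fl : Flags) : {co : Cols n // cOK n fl co} ≃
    {x : Fin (n+1) // Pone n (cond_b fl) x} ×
    {x : Fin (n+1) × Fin (n+1) // Ppair n (cond_f fl) x} ×
    {x : Fin (n+1) × Fin (n+1) // Ppair n (cond_r fl) x} ×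
    {x : Fin (n+1) × Fin (n+1) // Psuf2 n (cond_zp fl) x} ×
    {x : Fin (n+1) × Fin (n+1) // Psuf2 n (cond_oq fl) x} ×
    {x : Fin (n+1) // Psuf1 n (cond_tp fl) x} ×
    {x : Fin (n+1) // Psuf1 n (cond_bp fl) x} where
  toFun c := ⟨⟨c.1.1, c.2.1⟩, ⟨c.1.2.1, c.2.2.1⟩, ⟨c.1.2.2.1, c.2.2.2.1⟩,
    ⟨c.1.2.2.2.1, c.2.2.2.2.1⟩, ⟨c.1.2.2.2.2.1, c.2.2.2.2.2.1⟩,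
    ⟨c.1.2.2.2.2.2.1, c.2.2.2.2.2.2.1⟩, ⟨c.1.2.2.2.2.2.2, c.2.2.2.2.2.2.2⟩⟩
  invFun x := ⟨⟨x.1.1, x.2.1.1, x.2.2.1.1, x.2.2.2.1.1, x.2.2.2.2.1.1,
    x.2.2.2.2.2.1.1, x.2.2.2.2.2.2.1⟩,
    x.1.2, x.2.1.2, x.2.2.1.2, x.2.2.2.1.2, x.2.2.2.2.1.2, x.2.2.2.2.2.1.2,
    x.2.2.2.2.2.2.2⟩
  left_inv _ := rfl
  right_inv _ := rfl

def colsZEquiv (fl : Flags) : {co : Cols n // cZ n fl co} ≃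
    {x : Fin (n+1) // Pone n (cond_b fl) x} ×
    {x : Fin (n+1) × Fin (n+1) // Ppair n (cond_f fl) x} ×
    {x : Fin (n+1) × Fin (n+1) // Ppair n (cond_r fl) x} ×
    {x : Fin (n+1) × Fin (n+1) // x = ((0 : Fin (n+1)), (0 : Fin (n+1)))} ×
    {x : Fin (n+1) × Fin (n+1) // x = ((0 : Fin (n+1)), (0 : Fin (n+1)))} ×
    {x : Fin (n+1) // x = (0 : Fin (n+1))} ×
    {x : Fin (n+1) // x = (0 : Fin (n+1))} where
  toFun c := ⟨⟨c.1.1, c.2.1⟩, ⟨c.1.2.1, c.2.2.1⟩, ⟨c.1.2.2.1, c.2.2.2.1⟩,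
    ⟨c.1.2.2.2.1, c.2.2.2.2.1⟩, ⟨c.1.2.2.2.2.1, c.2.2.2.2.2.1⟩,
    ⟨c.1.2.2.2.2.2.1, c.2.2.2.2.2.2.1⟩, ⟨c.1.2.2.2.2.2.2, c.2.2.2.2.2.2.2⟩⟩
  invFun x := ⟨⟨x.1.1, x.2.1.1, x.2.2.1.1, x.2.2.2.1.1, x.2.2.2.2.1.1,
    x.2.2.2.2.2.1.1, x.2.2.2.2.2.2.1⟩,
    x.1.2, x.2.1.2, x.2.2.1.2, x.2.2.2.1.2, x.2.2.2.2.1.2, x.2.2.2.2.2.1.2,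
    x.2.2.2.2.2.2.2⟩
  left_inv _ := rfl
  right_inv _ := rfl

lemma card_cols (fl : Flags) : Nat.card {co : Cols n // cOK n fl co} =
    (if cond_b fl then 1 else (n+1)) * ((if cond_f fl then 1 else tri n) *
    ((if cond_r fl then 1 else tri n) * ((if cond_zp fl then tri n else 1) *
    ((if cond_oq fl then tri n else 1) * ((if cond_tp fl then (n+1) else 1) *
    (if cond_bp fl then (n+1) else 1)))))) := by
  rw [Nat.card_congr (colsEquiv fl), Nat.card_prod, Nat.card_prod, Nat.card_prod,
    Nat.card_prod, Nat.card_prod, Nat.card_prod, card_Pone, card_Ppair, card_Ppair,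
    card_Psuf2, card_Psuf2, card_Psuf1, card_Psuf1]

lemma card_colsZ (fl : Flags) : Nat.card {co : Cols n // cZ n fl co} =
    (if cond_b fl then 1 else (n+1)) * ((if cond_f fl then 1 else tri n) *
    (if cond_r fl then 1 else tri n)) := by
  rw [Nat.card_congr (colsZEquiv fl), Nat.card_prod, Nat.card_prod, Nat.card_prod,
    Nat.card_prod, Nat.card_prod, Nat.card_prod, card_Pone, card_Ppair, card_Ppair,
    card_fin_eq, card_fin_eq]
  ring

lemma card_flag_cols {K : Flags → Cols n → Prop} [∀ fl co, Decidable (K fl co)] :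
    Nat.card {x : Flags × Cols n // fOK x.1 ∧ K x.1 x.2} =
      ∑ fl : Flags, Nat.card {co : Cols n // fOK fl ∧ K fl co} := by
  rw [Nat.card_congr (Equiv.subtypeProdEquivSigmaSubtype
    (fun (a : Flags) (b : Cols n) => fOK a ∧ K a b)), Nat.card_eq_fintype_card,
    Fintype.card_sigma]
  exact Finset.sum_congr rfl fun fl _ => (Nat.card_eq_fintype_card).symm

lemma card_drop_fok {K : Cols n → Prop} {fl : Flags} :
    Nat.card {co : Cols n // fOK fl ∧ K co} =
      if fOK fl then Nat.card {co : Cols n // K co} else 0 := by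
  by_cases h : fOK fl
  · rw [if_pos h]
    exact Nat.card_congr (Equiv.subtypeEquivRight (fun co => by simp [h]))
  · rw [if_neg h]
    have : IsEmpty {co : Cols n // fOK fl ∧ K co} := ⟨fun x => h x.2.1⟩
    exact Nat.card_of_isEmpty



lemma card_NA : Nat.card {x : Flags × Cols n // fOK x.1 ∧ cOK n x.1 x.2} =
    8 + 3*n + (14+6*n) * tri n + (8+5*n+n^2) * (tri n)^2 := by
  rw [card_flag_cols]
  have hterm : ∀ fl : Flags, Nat.card {co : Cols n // fOK fl ∧ cOK n fl co} =
      if fOK fl then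
        (if cond_b fl then 1 else (n+1)) * ((if cond_f fl then 1 else tri n) *
        ((if cond_r fl then 1 else tri n) * ((if cond_zp fl then tri n else 1) *
        ((if cond_oq fl then tri n else 1) * ((if cond_tp fl then (n+1) else 1) *
        (if cond_bp fl then (n+1) else 1)))))) else 0 := fun fl => by
    rw [card_drop_fok, card_cols]
  rw [Finset.sum_congr rfl (fun fl _ => hterm fl)]
  simp only [Fintype.sum_prod_type, Fin.sum_univ_two]
  norm_num [fOK, cond_b, cond_f, cond_r, cond_zp, cond_oq, cond_tp, cond_bp,
    gcB, gcF, gcR, gcT, gdf, gdr, gdb]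
  ring

lemma card_NZ : Nat.card {x : Flags × Cols n // fOK x.1 ∧ cZ n x.1 x.2} =
    20 + n + (8+2*n) * tri n + (2+n) * (tri n)^2 := by
  rw [card_flag_cols]
  have hterm : ∀ fl : Flags, Nat.card {co : Cols n // fOK fl ∧ cZ n fl co} =
      if fOK fl then
        (if cond_b fl then 1 else (n+1)) * ((if cond_f fl then 1 else tri n) *
        (if cond_r fl then 1 else tri n)) else 0 := fun fl => by
    rw [card_drop_fok, card_colsZ]
  rw [Finset.sum_congr rfl (fun fl _ => hterm fl)]
  simp only [Fintype.sum_prod_type, Fin.sum_univ_two]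
  norm_num [fOK, cond_b, cond_f, cond_r, cond_zp, cond_oq, cond_tp, cond_bp,
    gcB, gcF, gcR, gcT, gdf, gdr, gdb]
  ring



lemma card_split_eq : Nat.card {x : Flags × Cols n // fOK x.1 ∧ cOK n x.1 x.2} =
    Nat.card {x : Flags × Cols n // fOK x.1 ∧ (cOK n x.1 x.2 ∧ NEc n x.2)} +
    Nat.card {x : Flags × Cols n // fOK x.1 ∧ cZ n x.1 x.2} := by
  have hdisj : ∀ x : Flags × Cols n,
      ¬((fOK x.1 ∧ (cOK n x.1 x.2 ∧ NEc n x.2)) ∧ (fOK x.1 ∧ cZ n x.1 x.2)) := by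
    rintro x ⟨⟨-, -, hne⟩, ⟨-, -, -, h4, h5, h6, h7⟩⟩
    rw [NEc] at hne
    simp only [Prod.ext_iff, Fin.ext_iff, Fin.val_zero] at h4 h5 h6 h7
    omega
  rw [Nat.card_congr ((Equiv.subtypeEquivRight mainsplit_iff).trans
    (subtypeOrSum _ _ hdisj)), Nat.card_sum]

theorem four_mul_card_valid : 4 * Nat.card {p : Param n // Valid n p} =
    n^6 + 10*n^5 + 43*n^4 + 108*n^3 + 166*n^2 + 148*n := by
  have h1 : Nat.card {p : Param n // Valid n p} =
      Nat.card {x : Flags × Cols n // fOK x.1 ∧ (cOK n x.1 x.2 ∧ NEc n x.2)} :=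
    Nat.card_congr (paramEquiv.subtypeEquiv valid_iff)
  have h2 := card_split_eq (n := n)
  have hNA := card_NA (n := n)
  have hNZ := card_NZ (n := n)
  have htri := two_tri (n := n)
  rw [h1]
  rcases Nat.even_or_odd n with ⟨k, hk⟩ | ⟨k, hk⟩ <;> subst hk
  · have ht : tri (k + k) = (2*k+1)*(k+1) := by
      have h3 : (k+k+1)*(k+k+2) = 2*((2*k+1)*(k+1)) := by ring
      rw [h3] at htri
      omega
    rw [ht] at hNA hNZ
    have hIdent : 4 * (8 + 3*(k+k) + (14+6*(k+k)) * ((2*k+1)*(k+1)) +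
        (8+5*(k+k)+(k+k)^2) * ((2*k+1)*(k+1))^2) =
        ((k+k)^6 + 10*(k+k)^5 + 43*(k+k)^4 + 108*(k+k)^3 + 166*(k+k)^2 + 148*(k+k)) +
        4 * (20 + (k+k) + (8+2*(k+k)) * ((2*k+1)*(k+1)) + (2+(k+k)) * ((2*k+1)*(k+1))^2) := by
      ring
    linarith [h2, hNA, hNZ, hIdent]
  · have ht : tri (2*k+1) = (k+1)*(2*k+3) := by
      have h3 : (2*k+1+1)*(2*k+1+2) = 2*((k+1)*(2*k+3)) := by ring
      rw [h3] at htri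
      omega
    rw [ht] at hNA hNZ
    have hIdent : 4 * (8 + 3*(2*k+1) + (14+6*(2*k+1)) * ((k+1)*(2*k+3)) +
        (8+5*(2*k+1)+(2*k+1)^2) * ((k+1)*(2*k+3))^2) =
        ((2*k+1)^6 + 10*(2*k+1)^5 + 43*(2*k+1)^4 + 108*(2*k+1)^3 + 166*(2*k+1)^2 +
          148*(2*k+1)) +
        4 * (20 + (2*k+1) + (8+2*(2*k+1)) * ((k+1)*(2*k+3)) +
          (2+(2*k+1)) * ((k+1)*(2*k+3))^2) := by
      ring
    linarith [h2, hNA, hNZ, hIdent]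



theorem statement15 (n : ℕ) (hn : 1 ≤ n) :
    4 * Nat.card {U : Set (PN n) // IsDownset n U ∧ U ∩ Tset n ≠ ∅} =
      n ^ 6 + 10 * n ^ 5 + 43 * n ^ 4 + 108 * n ^ 3 + 166 * n ^ 2 + 148 * n := by
  have hbij : Function.Bijective (fun p : {p : Param n // Valid n p} =>
      (⟨decode p.1, decode_downset p.1 p.2, decode_meets hn p.1 p.2⟩ :
        {U : Set (PN n) // IsDownset n U ∧ U ∩ Tset n ≠ ∅})) := by
    constructor
    · intro p q h
      exact Subtype.ext (decode_inj p.1 q.1 (congrArg Subtype.val h))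
    · rintro ⟨U, hD, hT⟩
      obtain ⟨p, hv, hdec⟩ := decode_surj hn U hD hT
      exact ⟨⟨p, hv⟩, Subtype.ext hdec⟩
  rw [← Nat.card_congr (Equiv.ofBijective _ hbij)]
  exact four_mul_card_valid

end ExpandingBelnap
end
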